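/- arXiv:2008.12801 — 2 statements merged into one kernel-verified Lean document; each statement's English description precedes it below -/
import Mathlib

section
/- Let γ₁ be a symmetric admissible curve with zero dual length (γ₁(t+T) = -γ₁(t) and L_*(γ₁) = 0) and let γ₂ be an admissible curve of constant width zero ([γ₂(t+T),v(t+T)] + [γ₂(t),v(t)] = 0 for all t). Then the mixed area A(γ₁,γ₂) = 0; that is, the subspaces of zero-dual-length symmetric curves and zero-dual-length constant width curves are orthogonal with respect to the mixed area form. -/
open MeasureTheory Set

noncomputable section

/-- `det2 a b` is the determinant of the 2×2 matrix with columns `a, b ∈ ℝ²`. -/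
def det2 (a b : ℝ × ℝ) : ℝ := a.1 * b.2 - a.2 * b.1

/-- A smooth-by-parts parameterization `u` of the boundary of the unit ball `U` of a
normed plane: `u` is `2T`-periodic with `u(t+T) = -u(t)`, positively oriented, smooth on
each piece of a partition `pts 0 = 0 < pts 1 < ⋯ < pts (2n) = 2T` (with the pieces on
`[T,2T]` the translates of those on `[0,T]`), with one-sided derivative `du` and second
derivative `ddu` on each piece, `du ≠ 0` on each piece, and each piece either a strictly
convex arc (`det2 (du t) (ddu t) ≠ 0`) or a straight segment (`det2 (du t) (ddu t) = 0`). -/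
structure SBPBall where
  T : ℝ
  hT : 0 < T
  u : ℝ → ℝ × ℝ
  du : ℝ → ℝ × ℝ
  ddu : ℝ → ℝ × ℝ
  n : ℕ
  hn : 0 < n
  pts : ℕ → ℝ
  pts_zero : pts 0 = 0
  pts_last : pts (2 * n) = 2 * T
  pts_mono : StrictMonoOn pts (Set.Iic (2 * n))
  pts_half : ∀ i ≤ n, pts (i + n) = pts i + T
  cont : Continuous u
  per : Function.Periodic u (2 * T)
  du_per : Function.Periodic du (2 * T)
  antipodal : ∀ t, u (t + T) = -u t
  hderiv : ∀ i < 2 * n, ∀ t ∈ Set.Ico (pts i) (pts (i + 1)),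
    HasDerivWithinAt u (du t) (Set.Icc (pts i) (pts (i + 1))) t
  hderiv2 : ∀ i < 2 * n, ∀ t ∈ Set.Ico (pts i) (pts (i + 1)),
    HasDerivWithinAt du (ddu t) (Set.Icc (pts i) (pts (i + 1))) t
  smooth : ∀ i < 2 * n, ContDiffOn ℝ (⊤ : ℕ∞) u (Set.Ioo (pts i) (pts (i + 1)))
  du_ne : ∀ i < 2 * n, ∀ t ∈ Set.Ico (pts i) (pts (i + 1)), du t ≠ 0
  pieces : ∀ i < 2 * n,
    (∀ t ∈ Set.Ico (pts i) (pts (i + 1)), det2 (du t) (ddu t) ≠ 0) ∨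
    (∀ t ∈ Set.Ico (pts i) (pts (i + 1)), det2 (du t) (ddu t) = 0)
  pos : ∀ i < 2 * n, ∀ t ∈ Set.Ico (pts i) (pts (i + 1)), 0 < det2 (u t) (du t)
  isBall : ∃ Uset : Set (ℝ × ℝ), Convex ℝ Uset ∧ IsCompact Uset ∧
    (0 : ℝ × ℝ) ∈ interior Uset ∧ Set.range u = frontier Uset

/-- An admissible curve for the unit ball `B`: a closed (`2T`-periodic) piecewise-smooth
curve `γ` whose one-sided derivative on each piece satisfies `γ'(t) = r(t) • u'(t)`,
where `r` is the curvature radius of `γ`. -/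
structure AdmissibleCurve (B : SBPBall) where
  γ : ℝ → ℝ × ℝ
  dγ : ℝ → ℝ × ℝ
  r : ℝ → ℝ
  cont : Continuous γ
  per : Function.Periodic γ (2 * B.T)
  dγ_per : Function.Periodic dγ (2 * B.T)
  r_per : Function.Periodic r (2 * B.T)
  hderiv : ∀ i < 2 * B.n, ∀ t ∈ Set.Ico (B.pts i) (B.pts (i + 1)),
    HasDerivWithinAt γ (dγ t) (Set.Icc (B.pts i) (B.pts (i + 1))) t
  smooth : ∀ i < 2 * B.n, ContDiffOn ℝ (⊤ : ℕ∞) γ (Set.Ioo (B.pts i) (B.pts (i + 1)))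
  adm : ∀ i < 2 * B.n, ∀ t ∈ Set.Ico (B.pts i) (B.pts (i + 1)), dγ t = r t • B.du t

/-- The dual circle parameterization `v(t) = u'(t) / [u(t), u'(t)]`. -/
def SBPBall.v (B : SBPBall) (t : ℝ) : ℝ × ℝ := (det2 (B.u t) (B.du t))⁻¹ • B.du t

/-- The area `A(u)` of the unit ball `U`, `A(u) = (1/2)∫₀^{2T} [u(t), u'(t)] dt`. -/
def SBPBall.area (B : SBPBall) : ℝ :=
  (1 / 2) * ∫ t in (0 : ℝ)..(2 * B.T), det2 (B.u t) (B.du t)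

/-- The (signed) dual length `L_*(γ) = ∫₀^{2T} r(t)·[u(t), u'(t)] dt`. -/
def dualLength (B : SBPBall) (g : AdmissibleCurve B) : ℝ :=
  ∫ t in (0 : ℝ)..(2 * B.T), g.r t * det2 (B.u t) (B.du t)

/-- The mixed area `A(γ₁, γ₂) = (1/2)∫₀^{2T} [γ₁(t), γ₂'(t)] dt`. -/
def mixedArea (B : SBPBall) (g₁ g₂ : AdmissibleCurve B) : ℝ :=
  (1 / 2) * ∫ t in (0 : ℝ)..(2 * B.T), det2 (g₁.γ t) (g₂.dγ t)

/-- The signed area `A(γ) = A(γ, γ) = (1/2)∫₀^{2T} [γ(t), γ'(t)] dt`. -/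
def signedArea (B : SBPBall) (g : AdmissibleCurve B) : ℝ :=
  (1 / 2) * ∫ t in (0 : ℝ)..(2 * B.T), det2 (g.γ t) (g.dγ t)

/-- The mean width `w_γ = L_*(γ) / A(u)`. -/
def meanWidth (B : SBPBall) (g : AdmissibleCurve B) : ℝ := dualLength B g / B.area

/-- A closed curve is convex when its image is the frontier of a compact convex set. -/
def IsConvexCurve (c : ℝ → ℝ × ℝ) : Prop :=
  ∃ K : Set (ℝ × ℝ), Convex ℝ K ∧ IsCompact K ∧ Set.range c = frontier K

/-- A curve has constant width when `[c(t+T), v(t+T)] + [c(t), v(t)]` is constant in `t`. -/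
def HasConstantWidth (B : SBPBall) (c : ℝ → ℝ × ℝ) : Prop :=
  ∃ w : ℝ, ∀ t, det2 (c (t + B.T)) (B.v (t + B.T)) + det2 (c t) (B.v t) = w

/-- The Wigner caustic `WC(γ)(t) = (1/2)(γ(t) + γ(t+T))`. -/
def wcFun (B : SBPBall) (g : AdmissibleCurve B) (t : ℝ) : ℝ × ℝ :=
  (1 / 2 : ℝ) • (g.γ t + g.γ (t + B.T))

/-- The derivative of the Wigner caustic. -/
def wcDer (B : SBPBall) (g : AdmissibleCurve B) (t : ℝ) : ℝ × ℝ :=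
  (1 / 2 : ℝ) • (g.dγ t + g.dγ (t + B.T))

/-- The signed area of the Wigner caustic of `γ`. -/
def areaWC (B : SBPBall) (g : AdmissibleCurve B) : ℝ :=
  (1 / 2) * ∫ t in (0 : ℝ)..(2 * B.T), det2 (wcFun B g t) (wcDer B g t)

/-- The constant width measure set `CWMS(γ)(t) = (1/2)(γ(t) - γ(t+T) - w_γ·u(t))`. -/
def cwmsFun (B : SBPBall) (g : AdmissibleCurve B) (t : ℝ) : ℝ × ℝ :=
  (1 / 2 : ℝ) • (g.γ t - g.γ (t + B.T) - meanWidth B g • B.u t)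

/-- The derivative of the constant width measure set. -/
def cwmsDer (B : SBPBall) (g : AdmissibleCurve B) (t : ℝ) : ℝ × ℝ :=
  (1 / 2 : ℝ) • (g.dγ t - g.dγ (t + B.T) - meanWidth B g • B.du t)

/-- The signed area of the constant width measure set of `γ`. -/
def areaCWMS (B : SBPBall) (g : AdmissibleCurve B) : ℝ :=
  (1 / 2) * ∫ t in (0 : ℝ)..(2 * B.T), det2 (cwmsFun B g t) (cwmsDer B g t)


section Stmt7Aux

variable (B : SBPBall)

lemma det2_smul_right' (a b : ℝ × ℝ) (c : ℝ) : det2 a (c • b) = c * det2 a b := by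
  simp [det2, Prod.smul_def, smul_eq_mul]; ring

lemma det2_smul_left' (a b : ℝ × ℝ) (c : ℝ) : det2 (c • a) b = c * det2 a b := by
  simp [det2, Prod.smul_def, smul_eq_mul]; ring

lemma det2_neg_right' (a b : ℝ × ℝ) : det2 a (-b) = -det2 a b := by
  simp [det2]; ring

lemma det2_sub_left' (a b c : ℝ × ℝ) : det2 (a - b) c = det2 a c - det2 b c := by
  simp [det2]; ring

lemma SBP_pts_le {i j : ℕ} (hij : i ≤ j) (hj : j ≤ 2 * B.n) : B.pts i ≤ B.pts j := by
  rcases eq_or_lt_of_le hij with rfl | h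
  · exact le_rfl
  · exact le_of_lt (B.pts_mono (Set.mem_Iic.mpr (le_trans hij hj)) (Set.mem_Iic.mpr hj) h)

lemma SBP_pts_lt {i : ℕ} (hi : i < 2 * B.n) : B.pts i < B.pts (i + 1) :=
  B.pts_mono (Set.mem_Iic.mpr (by omega)) (Set.mem_Iic.mpr (by omega)) (by omega)

lemma SBP_du_anti {i : ℕ} (hi : i < B.n) {t : ℝ}
    (ht : t ∈ Set.Ico (B.pts i) (B.pts (i + 1))) : B.du (t + B.T) = -B.du t := by
  have hi2 : i < 2 * B.n := by omega
  have hin : i + B.n < 2 * B.n := by omega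
  have hpa : B.pts (i + B.n) = B.pts i + B.T := B.pts_half i hi.le
  have hpb : B.pts (i + B.n + 1) = B.pts (i + 1) + B.T := by
    have h := B.pts_half (i + 1) (by omega)
    have e : i + 1 + B.n = i + B.n + 1 := by omega
    rwa [e] at h
  have hlt : B.pts i < B.pts (i + 1) := SBP_pts_lt B hi2
  have htT : t + B.T ∈ Set.Ico (B.pts (i + B.n)) (B.pts (i + B.n + 1)) := by
    rw [hpa, hpb]
    exact ⟨by linarith [ht.1], by linarith [ht.2]⟩
  have H1 : HasDerivWithinAt B.u (B.du (t + B.T))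
      (Set.Icc (B.pts i + B.T) (B.pts (i + 1) + B.T)) (t + B.T) := by
    have h := B.hderiv (i + B.n) hin (t + B.T) htT
    rwa [hpa, hpb] at h
  have H2 : HasDerivWithinAt B.u (-B.du t)
      (Set.Icc (B.pts i + B.T) (B.pts (i + 1) + B.T)) (t + B.T) := by
    have hinner : HasDerivWithinAt (fun s : ℝ => s - B.T) 1
        (Set.Icc (B.pts i + B.T) (B.pts (i + 1) + B.T)) (t + B.T) := by
      simpa using (hasDerivWithinAt_id (t + B.T)
        (Set.Icc (B.pts i + B.T) (B.pts (i + 1) + B.T))).sub_const B.T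
    have houter : HasDerivWithinAt B.u (B.du t)
        (Set.Icc (B.pts i) (B.pts (i + 1))) ((fun s : ℝ => s - B.T) (t + B.T)) := by
      simpa using B.hderiv i hi2 t ht
    have hmaps : Set.MapsTo (fun s : ℝ => s - B.T)
        (Set.Icc (B.pts i + B.T) (B.pts (i + 1) + B.T)) (Set.Icc (B.pts i) (B.pts (i + 1))) := by
      intro s hs
      simp only [Set.mem_Icc] at hs ⊢
      constructor <;> linarith [hs.1, hs.2]
    have hcomp := HasDerivWithinAt.scomp (t + B.T) houter hinner hmaps
    have hneg := hcomp.neg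
    refine hneg.congr (fun s _ => ?_) ?_ |>.congr_deriv (by simp)
    · have h := B.antipodal (s - B.T)
      rw [sub_add_cancel] at h
      simp [Function.comp, h]
    · have h := B.antipodal (t + B.T - B.T)
      rw [sub_add_cancel] at h
      simp [Function.comp, h]
  have hu : UniqueDiffWithinAt ℝ (Set.Icc (B.pts i + B.T) (B.pts (i + 1) + B.T)) (t + B.T) :=
    uniqueDiffOn_Icc (by linarith) _ ⟨by linarith [ht.1], by linarith [ht.2]⟩
  rw [← H1.derivWithin hu, H2.derivWithin hu]

lemma SBP_keyDeriv (g₁ g₂ : AdmissibleCurve B)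
    (hsym : ∀ t, g₁.γ (t + B.T) = -g₁.γ t)
    (hcw : ∀ t, det2 (g₂.γ (t + B.T)) (B.v (t + B.T)) + det2 (g₂.γ t) (B.v t) = 0)
    {i : ℕ} (hi : i < B.n) {t : ℝ} (ht : t ∈ Set.Ico (B.pts i) (B.pts (i + 1))) :
    HasDerivWithinAt (fun s => det2 (g₁.γ s) (g₂.γ s - g₂.γ (s + B.T)))
      (det2 (g₁.γ t) (g₂.dγ t) + det2 (g₁.γ (t + B.T)) (g₂.dγ (t + B.T)))
      (Set.Icc (B.pts i) (B.pts (i + 1))) t := by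
  have hi2 : i < 2 * B.n := by omega
  have hin : i + B.n < 2 * B.n := by omega
  have hpa : B.pts (i + B.n) = B.pts i + B.T := B.pts_half i hi.le
  have hpb : B.pts (i + B.n + 1) = B.pts (i + 1) + B.T := by
    have h := B.pts_half (i + 1) (by omega)
    have e : i + 1 + B.n = i + B.n + 1 := by omega
    rwa [e] at h
  have htT : t + B.T ∈ Set.Ico (B.pts (i + B.n)) (B.pts (i + B.n + 1)) := by
    rw [hpa, hpb]
    exact ⟨by linarith [ht.1], by linarith [ht.2]⟩
  have h1 : HasDerivWithinAt g₁.γ (g₁.dγ t) (Set.Icc (B.pts i) (B.pts (i + 1))) t :=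
    g₁.hderiv i hi2 t ht
  have h2 : HasDerivWithinAt g₂.γ (g₂.dγ t) (Set.Icc (B.pts i) (B.pts (i + 1))) t :=
    g₂.hderiv i hi2 t ht
  have hshift : HasDerivWithinAt (fun s => g₂.γ (s + B.T)) (g₂.dγ (t + B.T))
      (Set.Icc (B.pts i) (B.pts (i + 1))) t := by
    have hinner : HasDerivWithinAt (fun s : ℝ => s + B.T) 1
        (Set.Icc (B.pts i) (B.pts (i + 1))) t := by
      simpa using (hasDerivWithinAt_id t (Set.Icc (B.pts i) (B.pts (i + 1)))).add_const B.T
    have houter : HasDerivWithinAt g₂.γ (g₂.dγ (t + B.T))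
        (Set.Icc (B.pts i + B.T) (B.pts (i + 1) + B.T)) ((fun s : ℝ => s + B.T) t) := by
      have h := g₂.hderiv (i + B.n) hin (t + B.T) htT
      rw [hpa, hpb] at h
      simpa using h
    have hmaps : Set.MapsTo (fun s : ℝ => s + B.T)
        (Set.Icc (B.pts i) (B.pts (i + 1))) (Set.Icc (B.pts i + B.T) (B.pts (i + 1) + B.T)) := by
      intro s hs
      simp only [Set.mem_Icc] at hs ⊢
      constructor <;> linarith [hs.1, hs.2]
    simpa [Function.comp_def] using HasDerivWithinAt.scomp t houter hinner hmaps
  have hε : HasDerivWithinAt (fun s => g₂.γ s - g₂.γ (s + B.T))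
      (g₂.dγ t - g₂.dγ (t + B.T)) (Set.Icc (B.pts i) (B.pts (i + 1))) t := h2.sub hshift
  -- the vanishing of [γ₁'(t), γ₂(t) - γ₂(t+T)]
  have hdu := SBP_du_anti B hi ht
  have hposu := B.pos i hi2 t ht
  have hne : det2 (B.u t) (B.du t) ≠ 0 := ne_of_gt hposu
  have hdet : det2 (B.u (t + B.T)) (B.du (t + B.T)) = det2 (B.u t) (B.du t) := by
    rw [B.antipodal t, hdu]; simp only [det2, Prod.fst_neg, Prod.snd_neg]; ring
  have hvT : B.v (t + B.T) = -B.v t := by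
    unfold SBPBall.v
    rw [hdet, hdu, smul_neg]
  have hw := hcw t
  rw [hvT, det2_neg_right'] at hw
  have hkeyv : det2 (g₂.γ t - g₂.γ (t + B.T)) (B.v t) = 0 := by
    rw [det2_sub_left']; linarith
  have hkey : det2 (g₂.γ t - g₂.γ (t + B.T)) (B.du t) = 0 := by
    have e : det2 (g₂.γ t - g₂.γ (t + B.T)) (B.v t)
        = (det2 (B.u t) (B.du t))⁻¹ * det2 (g₂.γ t - g₂.γ (t + B.T)) (B.du t) := by
      unfold SBPBall.v
      rw [det2_smul_right']
    rw [e] at hkeyv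
    rcases mul_eq_zero.mp hkeyv with h | h
    · exact absurd h (inv_ne_zero hne)
    · exact h
  have hdγ1 : g₁.dγ t = g₁.r t • B.du t := g₁.adm i hi2 t ht
  have hvanish : det2 (g₁.dγ t) (g₂.γ t - g₂.γ (t + B.T)) = 0 := by
    rw [hdγ1, det2_smul_left']
    have e : det2 (B.du t) (g₂.γ t - g₂.γ (t + B.T))
        = -det2 (g₂.γ t - g₂.γ (t + B.T)) (B.du t) := by simp [det2]; ring
    rw [e, hkey]
    ring
  have h1a : HasDerivWithinAt (fun s => (g₁.γ s).1) (g₁.dγ t).1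
      (Set.Icc (B.pts i) (B.pts (i + 1))) t := h1.fst
  have h1b : HasDerivWithinAt (fun s => (g₁.γ s).2) (g₁.dγ t).2
      (Set.Icc (B.pts i) (B.pts (i + 1))) t := h1.snd
  have hεa : HasDerivWithinAt (fun s => (g₂.γ s - g₂.γ (s + B.T)).1)
      (g₂.dγ t - g₂.dγ (t + B.T)).1 (Set.Icc (B.pts i) (B.pts (i + 1))) t := hε.fst
  have hεb : HasDerivWithinAt (fun s => (g₂.γ s - g₂.γ (s + B.T)).2)
      (g₂.dγ t - g₂.dγ (t + B.T)).2 (Set.Icc (B.pts i) (B.pts (i + 1))) t := hε.snd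
  have HP := (h1a.mul hεb).sub (h1b.mul hεa)
  simp only [det2]
  refine HP.congr_deriv ?_
  have hs := hsym t
  simp only [det2, Prod.fst_sub, Prod.snd_sub] at hvanish
  rw [hs]
  simp only [Prod.fst_neg, Prod.snd_neg, Prod.fst_sub, Prod.snd_sub]
  linear_combination hvanish

end Stmt7Aux

/-- if `γ₁` is a symmetric admissible curve with zero dual length and `γ₂`
is an admissible curve of constant width zero, then `A(γ₁,γ₂) = 0`: the subspaces of
zero-dual-length symmetric curves and zero-dual-length constant width curves are
orthogonal with respect to the mixed area form. -/
theorem stmt_7 (B : SBPBall) (g₁ g₂ : AdmissibleCurve B)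
    (hsym : ∀ t, g₁.γ (t + B.T) = -g₁.γ t) (hL1 : dualLength B g₁ = 0)
    (hcw : ∀ t, det2 (g₂.γ (t + B.T)) (B.v (t + B.T)) + det2 (g₂.γ t) (B.v t) = 0) :
    mixedArea B g₁ g₂ = 0 := by
  by_cases hInt : IntervalIntegrable (fun t => det2 (g₁.γ t) (g₂.dγ t)) volume 0 (2 * B.T)
  case neg =>
    unfold mixedArea
    rw [intervalIntegral.integral_undef hInt, mul_zero]
  case pos =>
  have hT := B.hT
  have hptsn : B.pts B.n = B.T := by
    have h := B.pts_half 0 (Nat.zero_le _)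
    simpa [B.pts_zero] using h
  have hpts0 : B.pts 0 = 0 := B.pts_zero
  have hsub : ∀ a b : ℝ, 0 ≤ a → a ≤ b → b ≤ 2 * B.T →
      IntervalIntegrable (fun t => det2 (g₁.γ t) (g₂.dγ t)) volume a b := by
    intro a b ha hab hb
    refine hInt.mono_set ?_
    rw [Set.uIcc_of_le hab, Set.uIcc_of_le (by linarith)]
    exact Set.Icc_subset_Icc ha hb
  have hsub' : ∀ a b : ℝ, 0 ≤ a → a ≤ b → b + B.T ≤ 2 * B.T →
      IntervalIntegrable (fun t => det2 (g₁.γ (t + B.T)) (g₂.dγ (t + B.T))) volume a b := by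
    intro a b ha hab hb
    have h := (hsub (a + B.T) (b + B.T) (by linarith) (by linarith) hb).comp_add_right B.T
    simpa using h
  have hbounds : ∀ i : ℕ, i < B.n → 0 ≤ B.pts i ∧ B.pts i ≤ B.pts (i + 1) ∧ B.pts (i + 1) ≤ B.T := by
    intro i hi
    refine ⟨?_, ?_, ?_⟩
    · rw [← hpts0]; exact SBP_pts_le B (Nat.zero_le _) (by omega)
    · exact SBP_pts_le B (by omega) (by omega)
    · rw [← hptsn]; exact SBP_pts_le B (by omega) (by omega)
  have hqint : ∀ i < B.n, IntervalIntegrable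
      (fun t => det2 (g₁.γ t) (g₂.dγ t) + det2 (g₁.γ (t + B.T)) (g₂.dγ (t + B.T)))
      volume (B.pts i) (B.pts (i + 1)) := by
    intro i hi
    obtain ⟨h0, h1, h2⟩ := hbounds i hi
    exact (hsub _ _ h0 h1 (by linarith)).add (hsub' _ _ h0 h1 (by linarith))
  set P : ℝ → ℝ := fun s => det2 (g₁.γ s) (g₂.γ s - g₂.γ (s + B.T)) with hP
  have hPcont : Continuous P := by
    have c1 : Continuous g₁.γ := g₁.cont
    have c2 : Continuous g₂.γ := g₂.cont
    have c3 : Continuous (fun s : ℝ => g₂.γ (s + B.T)) :=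
      c2.comp (continuous_id.add continuous_const)
    exact (c1.fst.mul (c2.sub c3).snd).sub (c1.snd.mul (c2.sub c3).fst)
  have hpieceint : ∀ i < B.n, (∫ t in (B.pts i)..(B.pts (i + 1)),
      (det2 (g₁.γ t) (g₂.dγ t) + det2 (g₁.γ (t + B.T)) (g₂.dγ (t + B.T))))
      = P (B.pts (i + 1)) - P (B.pts i) := by
    intro i hi
    obtain ⟨h0, h1, h2⟩ := hbounds i hi
    refine intervalIntegral.integral_eq_sub_of_hasDeriv_right_of_le h1
      hPcont.continuousOn ?_ (hqint i hi)
    intro x hx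
    have hx' : x ∈ Set.Ico (B.pts i) (B.pts (i + 1)) := ⟨hx.1.le, hx.2⟩
    have hd := SBP_keyDeriv B g₁ g₂ hsym hcw hi hx'
    exact hd.mono_of_mem_nhdsWithin (Icc_mem_nhdsGT_of_mem hx')
  have hsum := intervalIntegral.sum_integral_adjacent_intervals (μ := volume)
    (a := B.pts) (n := B.n) hqint
  rw [hpts0, hptsn] at hsum
  have htel : ∑ i ∈ Finset.range B.n, (P (B.pts (i + 1)) - P (B.pts i))
      = P (B.pts B.n) - P (B.pts 0) := Finset.sum_range_sub (fun i => P (B.pts i)) B.n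
  have hPper : P B.T = P 0 := by
    have e1 : g₁.γ B.T = -g₁.γ 0 := by simpa using hsym 0
    have e2 : g₂.γ (B.T + B.T) = g₂.γ 0 := by
      have h := g₂.per 0
      rw [zero_add] at h
      rw [show B.T + B.T = 2 * B.T by ring, h]
    simp only [hP, det2, e1, e2, zero_add, Prod.fst_neg, Prod.snd_neg, Prod.fst_sub, Prod.snd_sub]
    ring
  have hI1 : IntervalIntegrable (fun t => det2 (g₁.γ t) (g₂.dγ t)) volume 0 B.T :=
    hsub 0 B.T le_rfl hT.le (by linarith)
  have hI2 : IntervalIntegrable (fun t => det2 (g₁.γ t) (g₂.dγ t)) volume B.T (2 * B.T) :=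
    hsub B.T (2 * B.T) hT.le (by linarith) le_rfl
  have hI3 : IntervalIntegrable (fun t => det2 (g₁.γ (t + B.T)) (g₂.dγ (t + B.T))) volume 0 B.T :=
    hsub' 0 B.T le_rfl hT.le (by linarith)
  have hshift : (∫ t in (0:ℝ)..B.T, det2 (g₁.γ (t + B.T)) (g₂.dγ (t + B.T)))
      = ∫ t in B.T..(2 * B.T), det2 (g₁.γ t) (g₂.dγ t) := by
    rw [two_mul]
    simpa using intervalIntegral.integral_comp_add_right (a := 0) (b := B.T)
      (fun t => det2 (g₁.γ t) (g₂.dγ t)) B.T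
  have key : (∫ t in (0:ℝ)..(2 * B.T), det2 (g₁.γ t) (g₂.dγ t)) = 0 := by
    calc (∫ t in (0:ℝ)..(2 * B.T), det2 (g₁.γ t) (g₂.dγ t))
        = (∫ t in (0:ℝ)..B.T, det2 (g₁.γ t) (g₂.dγ t))
          + ∫ t in B.T..(2 * B.T), det2 (g₁.γ t) (g₂.dγ t) :=
          (intervalIntegral.integral_add_adjacent_intervals hI1 hI2).symm
      _ = (∫ t in (0:ℝ)..B.T, det2 (g₁.γ t) (g₂.dγ t))
          + ∫ t in (0:ℝ)..B.T, det2 (g₁.γ (t + B.T)) (g₂.dγ (t + B.T)) := by rw [hshift]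
      _ = ∫ t in (0:ℝ)..B.T,
          (det2 (g₁.γ t) (g₂.dγ t) + det2 (g₁.γ (t + B.T)) (g₂.dγ (t + B.T))) :=
          (intervalIntegral.integral_add hI1 hI3).symm
      _ = ∑ i ∈ Finset.range B.n, ∫ t in (B.pts i)..(B.pts (i + 1)),
          (det2 (g₁.γ t) (g₂.dγ t) + det2 (g₁.γ (t + B.T)) (g₂.dγ (t + B.T))) := hsum.symm
      _ = ∑ i ∈ Finset.range B.n, (P (B.pts (i + 1)) - P (B.pts i)) :=
          Finset.sum_congr rfl (fun i hi => hpieceint i (Finset.mem_range.mp hi))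
      _ = P (B.pts B.n) - P (B.pts 0) := htel
      _ = 0 := by rw [hptsn, hpts0, hPper]; ring
  unfold mixedArea
  rw [key, mul_zero]
end
end

section
/- For every admissible curve γ, the curve γ - WC(γ) is symmetric (i.e., (γ - WC(γ))(t+T) = -(γ - WC(γ))(t)), and the curve γ - CWMS(γ) is of constant width; consequently every admissible curve decomposes as γ = WC(γ) + CWMS(γ) + (w_γ/2)·u. -/
open MeasureTheory Set

noncomputable section

namespace SBPBall

lemma pts_n (B : SBPBall) : B.pts B.n = B.T := by
  have := B.pts_half 0 (Nat.zero_le _)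
  simpa [B.pts_zero] using this

lemma mem_piece (B : SBPBall) {t : ℝ} (h0 : 0 ≤ t) (h1 : t < 2 * B.T) :
    ∃ i < 2 * B.n, t ∈ Set.Ico (B.pts i) (B.pts (i + 1)) := by
  classical
  set P : ℕ → Prop := fun i => B.pts i ≤ t with hP
  have hP0 : P 0 := by simp [P, B.pts_zero, h0]
  set i := Nat.findGreatest P (2 * B.n) with hi
  have hile : i ≤ 2 * B.n := Nat.findGreatest_le _
  have hPi : P i := Nat.findGreatest_spec (Nat.zero_le _) hP0
  have hlt : i < 2 * B.n := by
    rcases lt_or_eq_of_le hile with h | h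
    · exact h
    · exfalso
      have h2 : B.pts (2 * B.n) ≤ t := by rw [← h]; exact hPi
      rw [B.pts_last] at h2; linarith
  refine ⟨i, hlt, hPi, ?_⟩
  by_contra hc
  push_neg at hc
  exact Nat.findGreatest_is_greatest (lt_add_one i) (by omega) hc

lemma reduce (B : SBPBall) (t : ℝ) : ∃ τ, 0 ≤ τ ∧ τ < 2 * B.T ∧ ∀ f : ℝ → ℝ × ℝ,
    Function.Periodic f (2 * B.T) → f τ = f t := by
  have hc : (0 : ℝ) < 2 * B.T := by linarith [B.hT]
  refine ⟨t - ⌊t / (2 * B.T)⌋ * (2 * B.T), Int.sub_floor_div_mul_nonneg t hc,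
    Int.sub_floor_div_mul_lt t hc, fun f hf => hf.sub_int_mul_eq _⟩

lemma det_pos (B : SBPBall) (t : ℝ) : 0 < det2 (B.u t) (B.du t) := by
  obtain ⟨τ, h0, h1, hf⟩ := B.reduce t
  rw [← hf B.u B.per, ← hf B.du B.du_per]
  obtain ⟨i, hi, hmem⟩ := B.mem_piece h0 h1
  exact B.pos i hi τ hmem

lemma du_antipodal_aux (B : SBPBall) {t : ℝ} (h0 : 0 ≤ t) (h1 : t < B.T) :
    B.du (t + B.T) = -B.du t := by
  obtain ⟨i, hi2n, hmem⟩ := B.mem_piece h0 (by linarith [B.hT])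
  have hin : i < B.n := by
    by_contra hge
    push_neg at hge
    have hmono : B.pts B.n ≤ B.pts i :=
      B.pts_mono.monotoneOn (Set.mem_Iic.2 (by omega)) (Set.mem_Iic.2 (by omega)) hge
    rw [B.pts_n] at hmono
    have := hmem.1
    linarith
  have hab : B.pts i < B.pts (i + 1) :=
    B.pts_mono (Set.mem_Iic.2 (by omega)) (Set.mem_Iic.2 (by omega)) (lt_add_one i)
  have hha : B.pts (i + B.n) = B.pts i + B.T := B.pts_half i (le_of_lt hin)
  have hhb : B.pts (i + B.n + 1) = B.pts (i + 1) + B.T := by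
    rw [show i + B.n + 1 = (i + 1) + B.n by omega]
    exact B.pts_half (i + 1) (by omega)
  set a := B.pts i
  set b := B.pts (i + 1)
  have hta : a ≤ t := hmem.1
  have htb : t < b := hmem.2
  have h2 : HasDerivWithinAt B.u (B.du (t + B.T)) (Set.Icc (a + B.T) (b + B.T)) (t + B.T) := by
    have := B.hderiv (i + B.n) (by omega) (t + B.T)
      (by rw [hha, hhb]; exact ⟨by linarith, by linarith⟩)
    rwa [hha, hhb] at this
  have h1' : HasDerivWithinAt B.u (B.du t) (Set.Icc a b) t := B.hderiv i hi2n t hmem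
  have hsub : HasDerivWithinAt (fun s : ℝ => s - B.T) 1
      (Set.Icc (a + B.T) (b + B.T)) (t + B.T) := by
    simpa using (hasDerivWithinAt_id (t + B.T) (Set.Icc (a + B.T) (b + B.T))).sub_const B.T
  have hcomp : HasDerivWithinAt (fun s => B.u (s - B.T)) ((1 : ℝ) • B.du t)
      (Set.Icc (a + B.T) (b + B.T)) (t + B.T) :=
    HasDerivWithinAt.scomp_of_eq (t + B.T) h1' hsub
      (fun x hx => ⟨by linarith [hx.1], by linarith [hx.2]⟩) (by ring)
  have hfun : (fun s => -B.u (s - B.T)) = B.u := by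
    funext s
    have := B.antipodal (s - B.T)
    rw [sub_add_cancel] at this
    rw [this]
  have hneg : HasDerivWithinAt B.u (-((1 : ℝ) • B.du t))
      (Set.Icc (a + B.T) (b + B.T)) (t + B.T) := hfun ▸ hcomp.neg
  have hmem2 : t + B.T ∈ Set.Icc (a + B.T) (b + B.T) := ⟨by linarith, by linarith⟩
  have hu : UniqueDiffWithinAt ℝ (Set.Icc (a + B.T) (b + B.T)) (t + B.T) :=
    (uniqueDiffOn_Icc (by linarith)).uniqueDiffWithinAt hmem2
  have := (h2.derivWithin hu).symm.trans (hneg.derivWithin hu)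
  simpa using this

lemma du_antipodal (B : SBPBall) (t : ℝ) : B.du (t + B.T) = -B.du t := by
  have key : ∀ τ, 0 ≤ τ → τ < 2 * B.T → B.du (τ + B.T) = -B.du τ := by
    intro τ h0 h1
    rcases lt_or_ge τ B.T with h | h
    · exact B.du_antipodal_aux h0 h
    · have h2 := B.du_antipodal_aux (t := τ - B.T) (by linarith) (by linarith)
      rw [sub_add_cancel] at h2
      have h3 : B.du (τ + B.T) = B.du (τ - B.T) := by
        have := B.du_per (τ - B.T)
        rwa [show τ - B.T + 2 * B.T = τ + B.T by ring] at this
      rw [h3, h2, neg_neg]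
  obtain ⟨τ, h0, h1, hf⟩ := B.reduce t
  have hdu : B.du τ = B.du t := hf _ B.du_per
  have hdu2 : B.du (τ + B.T) = B.du (t + B.T) := by
    refine hf (fun s => B.du (s + B.T)) fun x => ?_
    simp only
    rw [show x + 2 * B.T + B.T = x + B.T + 2 * B.T by ring]
    exact B.du_per _
  rw [← hdu2, ← hdu]
  exact key τ h0 h1

lemma v_antipodal (B : SBPBall) (t : ℝ) : B.v (t + B.T) = -B.v t := by
  unfold SBPBall.v
  rw [B.du_antipodal, B.antipodal,
    show det2 (-B.u t) (-B.du t) = det2 (B.u t) (B.du t) by simp [det2],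
    smul_neg]

lemma det_uv (B : SBPBall) (t : ℝ) : det2 (B.u t) (B.v t) = 1 := by
  have h := B.det_pos t
  unfold SBPBall.v
  rw [show det2 (B.u t) ((det2 (B.u t) (B.du t))⁻¹ • B.du t)
      = (det2 (B.u t) (B.du t))⁻¹ * det2 (B.u t) (B.du t) by
    simp [det2, Prod.smul_fst, Prod.smul_snd, smul_eq_mul]; ring]
  exact inv_mul_cancel₀ (ne_of_gt h)

end SBPBall

/-- for every admissible curve `γ`, the curve `γ - WC(γ)` is symmetric,
the curve `γ - CWMS(γ)` is of constant width, and consequently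
`γ = WC(γ) + CWMS(γ) + (w_γ/2)·u`. -/
theorem stmt_10 (B : SBPBall) (g : AdmissibleCurve B) :
    (∀ t, g.γ (t + B.T) - wcFun B g (t + B.T) = -(g.γ t - wcFun B g t)) ∧
    HasConstantWidth B (fun t => g.γ t - cwmsFun B g t) ∧
    (∀ t, g.γ t = wcFun B g t + cwmsFun B g t + (meanWidth B g / 2) • B.u t) := by
  have hper : ∀ s, g.γ (s + B.T + B.T) = g.γ s := by
    intro s
    have := g.per s
    rwa [show s + 2 * B.T = s + B.T + B.T by ring] at this
  refine ⟨fun t => ?_, ⟨meanWidth B g, fun t => ?_⟩, fun t => ?_⟩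
  · simp only [wcFun, hper]
    module
  · have hv := B.v_antipodal t
    have hu := B.antipodal t
    have h1 : (B.u t).1 * (B.v t).2 - (B.u t).2 * (B.v t).1 = 1 := B.det_uv t
    simp only [cwmsFun, hper, hu, hv]
    simp only [det2, Prod.fst_sub, Prod.snd_sub, Prod.fst_neg, Prod.snd_neg,
      Prod.smul_fst, Prod.smul_snd, smul_eq_mul]
    linear_combination meanWidth B g * h1
  · simp only [wcFun, cwmsFun]
    module
end
end
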